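/- arXiv:2604.09116 — 2 statements merged into one kernel-verified Lean document; each statement's English description precedes it below -/
import Mathlib

section
/- Let C and D be symmetric monoidal categories, let F : C ⥤ D be a strong monoidal functor admitting a right adjoint G, let X be an object of D and let Y be a dualizable object of C. Then the canonical projection-formula morphism G(X) ⊗ Y → G(X ⊗ F(Y)) — the adjoint transpose of F(G(X) ⊗ Y) ≅ F(G(X)) ⊗ F(Y) → X ⊗ F(Y) (counit on the first factor) — is an isomorphism. -/
/-!
Write `ᘁY` for a left dual of `Y`; in a braided category a right dual is also a left dual.
For every object `A` there is a chain of natural bijections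
`(A ⟶ G X ⊗ Y) ≃ (A ⊗ ᘁY ⟶ G X) ≃ (F (A ⊗ ᘁY) ⟶ X) ≃ (F A ⊗ F ᘁY ⟶ X) ≃ (F A ⟶ X ⊗ F Y)
  ≃ (A ⟶ G (X ⊗ F Y))`,
the third given by `μ` and the fourth by the exact pairing `(F ᘁY, F Y)` which `F`
inherits from `(ᘁY, Y)`. Because `F` carries the tensor-hom bijection of `(ᘁY, Y)` to that of
`(F ᘁY, F Y)` up to `μ` and `δ`, the composite is postcomposition with the projection map,
which is therefore an isomorphism by Yoneda.
-/

open CategoryTheory MonoidalCategory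

namespace CategoryTheory

open Functor.LaxMonoidal Functor.OplaxMonoidal Functor.Monoidal

variable {C D : Type*} [Category C] [Category D] [MonoidalCategory C] [MonoidalCategory D]
  (F : C ⥤ D) [F.Monoidal]

abbrev ExactPairing.map (X Y : C) [ExactPairing X Y] : ExactPairing (F.obj X) (F.obj Y) where
  coevaluation' := ε F ≫ F.map (η_ X Y) ≫ δ F X Y
  evaluation' := μ F Y X ≫ F.map (ε_ X Y) ≫ η F
  coevaluation_evaluation' := by
    have hF := congrArg (fun f => μ F _ _ ≫ F.map f ≫ δ F _ _)
      (ExactPairing.coevaluation_evaluation X Y)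
    simp only [Functor.map_comp, map_whiskerLeft, map_whiskerRight, map_associator_inv,
      map_rightUnitor, map_leftUnitor_inv, Category.assoc, μ_δ_assoc, μ_δ,
      Category.comp_id] at hF
    simp only [MonoidalCategory.whiskerLeft_comp, comp_whiskerRight, Category.assoc]
    rw [reassoc_of% hF]
    simp
  evaluation_coevaluation' := by
    have hF := congrArg (fun f => μ F _ _ ≫ F.map f ≫ δ F _ _)
      (ExactPairing.evaluation_coevaluation X Y)
    simp only [Functor.map_comp, map_whiskerLeft, map_whiskerRight, map_associator,
      map_rightUnitor_inv, map_leftUnitor, Category.assoc, μ_δ_assoc, μ_δ,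
      Category.comp_id] at hF
    simp only [MonoidalCategory.whiskerLeft_comp, comp_whiskerRight, Category.assoc]
    rw [reassoc_of% hF]
    simp

attribute [local instance] ExactPairing.map

lemma ExactPairing.map_coevaluation (X Y : C) [ExactPairing X Y] :
    η_ (F.obj X) (F.obj Y) = ε F ≫ F.map (η_ X Y) ≫ δ F X Y := rfl

theorem Functor.Monoidal.tensorRightHomEquiv_map {A Y' Y Z : C} [ExactPairing Y' Y]
    (f : A ⊗ Y' ⟶ Z) :
    tensorRightHomEquiv (F.obj A) (F.obj Y') (F.obj Y) (F.obj Z) (μ F A Y' ≫ F.map f) =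
      F.map (tensorRightHomEquiv A Y' Y Z f) ≫ δ F Z Y := by
  simp only [tensorRightHomEquiv, Equiv.coe_fn_mk, ExactPairing.map_coevaluation,
    Functor.map_comp, map_whiskerLeft, map_whiskerRight, map_associator_inv, map_rightUnitor_inv,
    Category.assoc, μ_δ_assoc, μ_δ, Category.comp_id, MonoidalCategory.whiskerLeft_comp,
    comp_whiskerRight]

variable {F} {G : D ⥤ C} (adj : F ⊣ G)

def Adjunction.projectionMap (X : D) (Y : C) : G.obj X ⊗ Y ⟶ G.obj (X ⊗ F.obj Y) :=
  adj.homEquiv _ _ ((μIso F (G.obj X) Y).inv ≫ (adj.counit.app X ⊗ₘ 𝟙 (F.obj Y)))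

theorem Adjunction.tensorRightHomEquiv_comp_projectionMap {A Y' Y : C} [ExactPairing Y' Y]
    (X : D) (h : A ⊗ Y' ⟶ G.obj X) :
    tensorRightHomEquiv A Y' Y (G.obj X) h ≫ adj.projectionMap X Y =
      adj.homEquiv _ _ (tensorRightHomEquiv (F.obj A) (F.obj Y') (F.obj Y) X
        (μ F A Y' ≫ (adj.homEquiv _ _).symm h)) := by
  rw [projectionMap, ← adj.homEquiv_naturality_left, μIso_inv, tensorHom_id,
    ← reassoc_of% tensorRightHomEquiv_map, ← tensorRightHomEquiv_naturality,
    Category.assoc, adj.homEquiv_counit]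

theorem Adjunction.isIso_projectionMap (X : D) (Y : C) [HasLeftDual Y] :
    IsIso (adj.projectionMap X Y) := by
  refine isIso_of_yoneda_map_bijective _ fun A => ?_
  have hcomp : (fun g : A ⟶ G.obj X ⊗ Y => g ≫ adj.projectionMap X Y) =
      (tensorRightHomEquiv A (ᘁY) Y (G.obj X)).symm.trans ((adj.homEquiv _ _).symm.trans
        ((μIso F A (ᘁY)).symm.homFromEquiv.trans
          ((tensorRightHomEquiv _ _ _ _).trans (adj.homEquiv _ _)))) := by
    ext g
    conv_lhs => rw [← (tensorRightHomEquiv A (ᘁY) Y (G.obj X)).apply_symm_apply g]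
    exact adj.tensorRightHomEquiv_comp_projectionMap X _
  rw [hcomp]
  exact Equiv.bijective _

end CategoryTheory

theorem stmt0_general {C D : Type*} [Category C] [Category D]
    [MonoidalCategory C] [MonoidalCategory D]
    [SymmetricCategory C]
    (F : C ⥤ D) [F.Monoidal] (G : D ⥤ C) (adj : F ⊣ G)
    (X : D) (Y : C) [HasRightDual Y] :
    IsIso ((adj.homEquiv (G.obj X ⊗ Y) (X ⊗ F.obj Y))
      ((Functor.Monoidal.μIso F (G.obj X) Y).inv ≫ (adj.counit.app X ⊗ₘ 𝟙 (F.obj Y)))) :=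
  letI := BraidedCategory.hasLeftDualOfHasRightDual (X := Y)
  adj.isIso_projectionMap X Y

/-- **Projection formula for dualizable objects.**
Let `C`, `D` be symmetric monoidal categories, `F : C ⥤ D` a strong monoidal functor with
right adjoint `G`, `X : D`, and `Y : C` dualizable. Then the canonical morphism
`G(X) ⊗ Y ⟶ G(X ⊗ F(Y))`, the adjoint transpose of
`F(G(X) ⊗ Y) ≅ F(G(X)) ⊗ F(Y) ⟶ X ⊗ F(Y)` (counit on the first factor), is an isomorphism. -/
theorem stmt0 {C D : Type*} [Category C] [Category D]
    [MonoidalCategory C] [MonoidalCategory D]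
    [SymmetricCategory C] [SymmetricCategory D]
    (F : C ⥤ D) [F.Monoidal] (G : D ⥤ C) (adj : F ⊣ G)
    (X : D) (Y : C) [HasRightDual Y] :
    IsIso ((adj.homEquiv (G.obj X ⊗ Y) (X ⊗ F.obj Y))
      ((Functor.Monoidal.μIso F (G.obj X) Y).inv ≫ (adj.counit.app X ⊗ₘ 𝟙 (F.obj Y)))) :=
  stmt0_general F G adj X Y
end

section
/- Let R be a ℚ-algebra, let L be a Lie algebra over R, and let D : L → L be a derivation (D⁅a,b⁆ = ⁅D a, b⁆ + ⁅a, D b⁆) satisfying D ∘ D ∘ D = D as a linear endomorphism of L. If x, y ∈ L satisfy D x = x and D y = y, then ⁅x, y⁆ = 0. -/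
/-- Let `L` be a Lie algebra over a `ℚ`-algebra `R` and `D : L → L` a derivation with
`D ∘ D ∘ D = D`.  If `D x = x` and `D y = y` then `⁅x, y⁆ = 0`. -/
theorem stmt3 {R : Type*} [CommRing R] [Algebra ℚ R]
    {L : Type*} [LieRing L] [LieAlgebra R L]
    (D : L →ₗ[R] L) (hder : ∀ a b : L, D ⁅a, b⁆ = ⁅D a, b⁆ + ⁅a, D b⁆)
    (h3 : D ∘ₗ D ∘ₗ D = D)
    {x y : L} (hx : D x = x) (hy : D y = y) : ⁅x, y⁆ = 0 := by
  set z := ⁅x, y⁆ with hz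
  have hDz : D z = (2 : R) • z := by
    rw [hz, hder, hx, hy, two_smul]
  have h8 : D (D (D z)) = (8 : R) • z := by
    simp only [hDz, map_smul, smul_smul]
    norm_num
  have h2 : D (D (D z)) = (2 : R) • z := by
    have := congrFun (congrArg DFunLike.coe h3) z
    simpa using this.trans hDz
  have h6 : (6 : R) • z = 0 := by
    have : (8 : R) • z - (2 : R) • z = 0 := by rw [← h8, h2, sub_self]
    rw [← sub_smul] at this
    norm_num at this
    exact this
  have : ((algebraMap ℚ R) (6⁻¹) * 6) • z = 0 := by
    rw [← smul_smul, h6, smul_zero]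
  rwa [← map_ofNat (algebraMap ℚ R) 6, ← map_mul, inv_mul_cancel₀ (by norm_num : (6:ℚ) ≠ 0),
    map_one, one_smul] at this
end
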